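/- arXiv:2203.02695 — 2 statements merged into one kernel-verified Lean document; each statement's English description precedes it below -/
import Mathlib

section
/- For every natural number n, the number of isomorphism classes of discrete iposets on n points equals ∑_{s=0}^n ∑_{t=0}^n ∑_{u=max(0,s+t−n)}^{min(s,t)} C(s,u)·C(t,u)·u!. -/
/-- A poset with interfaces (iposet): a finite strict poset on `Fin n`
together with injective source and target maps whose images lie in the
minimal respectively maximal elements. -/
structure Iposet where
  n : ℕ
  lt : Fin n → Fin n → Prop
  lt_irrefl : ∀ x, ¬ lt x x
  lt_trans : ∀ x y z, lt x y → lt y z → lt x z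
  k : ℕ
  m : ℕ
  s : Fin k → Fin n
  t : Fin m → Fin n
  s_inj : Function.Injective s
  t_inj : Function.Injective t
  s_min : ∀ i x, ¬ lt x (s i)
  t_max : ∀ i x, ¬ lt (t i) x

namespace Iposet

/-- Isomorphism of iposets: a poset isomorphism commuting with the
source and target maps. -/
def Iso (P Q : Iposet) : Prop :=
  ∃ (hk : P.k = Q.k) (hm : P.m = Q.m) (f : Fin P.n ≃ Fin Q.n),
    (∀ x y, P.lt x y ↔ Q.lt (f x) (f y)) ∧
    (∀ i, f (P.s i) = Q.s (Fin.cast hk i)) ∧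
    (∀ i, f (P.t i) = Q.t (Fin.cast hm i))

/-- Isomorphism of underlying posets (interfaces disregarded). -/
def PosetIso (P Q : Iposet) : Prop :=
  ∃ f : Fin P.n ≃ Fin Q.n, ∀ x y, P.lt x y ↔ Q.lt (f x) (f y)

def Discrete (P : Iposet) : Prop := ∀ x y, ¬ P.lt x y

def Starter (P : Iposet) : Prop := Discrete P ∧ Function.Bijective P.t

def Terminator (P : Iposet) : Prop := Discrete P ∧ Function.Bijective P.s

def Symmetry (P : Iposet) : Prop :=
  Discrete P ∧ Function.Bijective P.s ∧ Function.Bijective P.t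

def InterfaceConsistent (P : Iposet) : Prop :=
  ∀ (i j : Fin P.k) (i' j' : Fin P.m),
    P.s i = P.t i' → P.s j = P.t j' → ((i : ℕ) < (j : ℕ) ↔ (i' : ℕ) < (j' : ℕ))

def IsMinEl (P : Iposet) (x : Fin P.n) : Prop := ∀ y, ¬ P.lt y x
def IsMaxEl (P : Iposet) (x : Fin P.n) : Prop := ∀ y, ¬ P.lt x y

def LeftWink (P : Iposet) : Prop := ∀ x, IsMinEl P x ↔ ∃ i, P.s i = x
def RightWink (P : Iposet) : Prop := ∀ x, IsMaxEl P x ↔ ∃ i, P.t i = x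
def Wink (P : Iposet) : Prop := LeftWink P ∧ RightWink P

/-- Witness data exhibiting `R` as the gluing composition `P * Q`. -/
structure GluingData (P Q R : Iposet) where
  hg : P.m = Q.k
  hk : R.k = P.k
  hm : R.m = Q.m
  f : Fin P.n → Fin R.n
  g : Fin Q.n → Fin R.n
  f_inj : Function.Injective f
  g_inj : Function.Injective g
  cover : ∀ x, (∃ a, f a = x) ∨ (∃ b, g b = x)
  agree : ∀ i : Fin P.m, f (P.t i) = g (Q.s (Fin.cast hg i))
  overlap : ∀ a b, f a = g b → ∃ i, a = P.t i
  order : ∀ x y, R.lt x y ↔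
      (∃ a b, f a = x ∧ f b = y ∧ P.lt a b) ∨
      (∃ a b, g a = x ∧ g b = y ∧ Q.lt a b) ∨
      (∃ a b, f a = x ∧ g b = y ∧ (∀ i, a ≠ P.t i) ∧ (∀ j, b ≠ Q.s j))
  s_eq : ∀ i, R.s i = f (P.s (Fin.cast hk i))
  t_eq : ∀ i, R.t i = g (Q.t (Fin.cast hm i))

/-- `R` is (isomorphic to) the gluing composition `P * Q`. -/
def IsGluing (P Q R : Iposet) : Prop := Nonempty (GluingData P Q R)

/-- Witness data exhibiting `R` as the parallel composition `P ⊗ Q`. -/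
structure ParData (P Q R : Iposet) where
  hk : R.k = P.k + Q.k
  hm : R.m = P.m + Q.m
  f : Fin P.n → Fin R.n
  g : Fin Q.n → Fin R.n
  f_inj : Function.Injective f
  g_inj : Function.Injective g
  cover : ∀ x, (∃ a, f a = x) ∨ (∃ b, g b = x)
  disjoint : ∀ a b, f a ≠ g b
  order : ∀ x y, R.lt x y ↔
      (∃ a b, f a = x ∧ f b = y ∧ P.lt a b) ∨
      (∃ a b, g a = x ∧ g b = y ∧ Q.lt a b)
  s_eq₁ : ∀ i : Fin P.k, R.s (Fin.cast hk.symm (Fin.castAdd Q.k i)) = f (P.s i)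
  s_eq₂ : ∀ i : Fin Q.k, R.s (Fin.cast hk.symm (Fin.natAdd P.k i)) = g (Q.s i)
  t_eq₁ : ∀ i : Fin P.m, R.t (Fin.cast hm.symm (Fin.castAdd Q.m i)) = f (P.t i)
  t_eq₂ : ∀ i : Fin Q.m, R.t (Fin.cast hm.symm (Fin.natAdd P.m i)) = g (Q.t i)

/-- `R` is (isomorphic to) the parallel composition `P ⊗ Q`. -/
def IsPar (P Q R : Iposet) : Prop := Nonempty (ParData P Q R)

/-- Gluing-parallel iposets: built from the (four) iposets on a single
point by finitely many gluing and parallel compositions, or empty. -/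
inductive GP : Iposet → Prop
  | empty (P : Iposet) : P.n = 0 → GP P
  | single (P : Iposet) : P.n = 1 → GP P
  | glue (P Q R : Iposet) : GP P → GP Q → IsGluing P Q R → GP R
  | par (P Q R : Iposet) : GP P → GP Q → IsPar P Q R → GP R

end Iposet

/-!
A discrete iposet on `n` points is determined up to isomorphism by its arities `k`, `m` and the
partial injection from targets to sources recording which target point is also a source point:
two discrete iposets with the same data are isomorphic because any bijection between the
interface points extends to the carriers. The interface points are `k + m - u` distinct points,
where `u` is the size of the domain, so the data occurring are exactly those with
`k + m - u ≤ n`, and there are `C(m, u) · C(k, u) · u!` partial injections `[m] ⇀ [k]` with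
domain of size `u`.
-/

open Finset Function

theorem Equiv.Perm.exists_extending_pair_of_eq_iff {ι β : Type*} [Finite β] (f g : ι → β)
    (h : ∀ i j, f i = f j ↔ g i = g j) : ∃ σ : Equiv.Perm β, ∀ i, σ (f i) = g i := by
  have hg : Injective (g ∘ Set.rangeSplitting f) := fun x y hxy => Subtype.ext <| by
    rw [← Set.apply_rangeSplitting f x, ← Set.apply_rangeSplitting f y]
    exact (h _ _).mpr hxy
  obtain ⟨σ, hσ⟩ := Equiv.Perm.exists_extending_pair _ _ Subtype.val_injective hg
  refine ⟨σ, fun i => ?_⟩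
  rw [show f i = ((⟨f i, i, rfl⟩ : Set.range f) : β) from rfl, hσ]
  exact (h _ _).mp (Set.apply_rangeSplitting f _)

abbrev PartialEmbedding (α β : Type*) := Σ S : Finset α, S ↪ β

namespace PartialEmbedding

variable {α β γ : Type*}

def Rel (p : PartialEmbedding α β) (a : α) (b : β) : Prop := ∃ h : a ∈ p.1, p.2 ⟨a, h⟩ = b

theorem rel_injective : Injective (Rel : PartialEmbedding α β → α → β → Prop) := by
  rintro ⟨S, e⟩ ⟨S', e'⟩ h
  have key : ∀ a b, Rel ⟨S, e⟩ a b ↔ Rel ⟨S', e'⟩ a b := fun a b => by rw [h]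
  obtain rfl : S = S' := Finset.ext fun a =>
    ⟨fun ha => ((key a _).mp ⟨ha, rfl⟩).1, fun ha => ((key a _).mpr ⟨ha, rfl⟩).1⟩
  congr
  ext ⟨a, ha⟩
  obtain ⟨_, he⟩ := (key a _).mp ⟨ha, rfl⟩
  exact he.symm

open Classical in
noncomputable def ofEmbeddings [Fintype α] (s : β ↪ γ) (t : α ↪ γ) : PartialEmbedding α β :=
  ⟨univ.filter fun a => t a ∈ Set.range s, ⟨fun a => (mem_filter.mp a.2).2.choose, fun a a' h =>
    Subtype.ext <| t.injective <| by
      rw [← (mem_filter.mp a.2).2.choose_spec, ← (mem_filter.mp a'.2).2.choose_spec]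
      exact congrArg s h⟩⟩

section
variable [Fintype α] (s : β ↪ γ) (t : α ↪ γ)

theorem mem_ofEmbeddings {a : α} : a ∈ (ofEmbeddings s t).1 ↔ t a ∈ Set.range s := by
  simp [ofEmbeddings]

theorem rel_ofEmbeddings (a : α) (b : β) : (ofEmbeddings s t).Rel a b ↔ s b = t a := by
  constructor
  · rintro ⟨h, rfl⟩
    exact ((mem_ofEmbeddings s t).mp h).choose_spec
  · intro h
    have ha := (mem_ofEmbeddings s t).mpr ⟨b, h⟩
    exact ⟨ha, s.injective (((mem_ofEmbeddings s t).mp ha).choose_spec.trans h.symm)⟩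

theorem injective_sumElim_ofEmbeddings :
    Injective (Sum.elim s (t ∘ Subtype.val) : β ⊕ {a // a ∉ (ofEmbeddings s t).1} → γ) :=
  s.injective.sumElim (t.injective.comp Subtype.val_injective) fun b a h =>
    a.2 ((mem_ofEmbeddings s t).mpr ⟨b, h⟩)

theorem card_subtype_domain_card [Fintype β] (q : ℕ → Prop) [DecidablePred q] :
    Fintype.card {p : PartialEmbedding α β // q #p.1} =
      ∑ u ∈ range (Fintype.card α + 1) with q u,
        (Fintype.card α).choose u * (Fintype.card β).descFactorial u := by
  rw [Fintype.card_congr (Equiv.subtypeSigmaEquiv _ fun S : Finset α => q #S),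
    Fintype.card_sigma]
  simp only [Fintype.card_embedding_eq, Fintype.card_coe]
  rw [← Finset.sum_subtype (univ.filter fun S : Finset α => q #S) (by simp)
      fun S => (Fintype.card β).descFactorial #S, sum_filter, ← powerset_univ,
    sum_powerset_apply_card (fun u => if q u then (Fintype.card β).descFactorial u else 0),
    sum_filter, card_univ]
  simp only [smul_eq_mul, mul_ite, mul_zero]

end

variable [DecidableEq α]

@[simps apply]
def toSum (p : PartialEmbedding α β) : α ↪ β ⊕ {a // a ∉ p.1} where
  toFun a := if h : a ∈ p.1 then .inl (p.2 ⟨a, h⟩) else .inr ⟨a, h⟩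
  inj' a a' haa' := by
    by_cases h : a ∈ p.1 <;> by_cases h' : a' ∈ p.1 <;>
      simp only [h, h', dite_true, dite_false, Sum.inl.injEq, Sum.inr.injEq, reduceCtorEq] at haa'
    · exact congrArg Subtype.val (p.2.injective haa')
    · exact congrArg Subtype.val haa'

theorem inl_eq_toSum_iff (p : PartialEmbedding α β) (a : α) (b : β) :
    Sum.inl b = p.toSum a ↔ p.Rel a b := by
  by_cases h : a ∈ p.1 <;> simp [Rel, h, eq_comm]

theorem card_sum_compl_add_card [Fintype α] [Fintype β] (p : PartialEmbedding α β) :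
    Fintype.card (β ⊕ {a // a ∉ p.1}) + #p.1 = Fintype.card β + Fintype.card α := by
  rw [Fintype.card_sum, Fintype.card_subtype_compl, Fintype.card_coe]
  have := Finset.card_le_univ p.1
  omega

end PartialEmbedding

theorem sum_choose_mul_descFactorial (n k m : ℕ) :
    ∑ u ∈ range (m + 1) with k + m ≤ n + u, m.choose u * k.descFactorial u =
      ∑ u ∈ Icc (k + m - n) (min k m), k.choose u * m.choose u * u.factorial := by
  symm
  refine sum_subset_zero_on_sdiff (fun u hu => ?_) (fun u hu => ?_) (fun u _ => ?_)
  · simp only [mem_Icc, mem_filter, mem_range] at hu ⊢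
    omega
  · simp only [mem_sdiff, mem_Icc, mem_filter, mem_range] at hu
    rw [Nat.descFactorial_eq_zero_iff_lt.mpr (by omega), mul_zero]
  · rw [Nat.descFactorial_eq_factorial_mul_choose]
    ring

namespace Iposet

def ofEmbeddings {n k m : ℕ} (s : Fin k ↪ Fin n) (t : Fin m ↪ Fin n) : Iposet where
  n := n
  lt _ _ := False
  lt_irrefl _ := id
  lt_trans _ _ _ h _ := h
  k := k
  m := m
  s := s
  t := t
  s_inj := s.injective
  t_inj := t.injective
  s_min _ _ := id
  t_max _ _ := id

theorem discrete_ofEmbeddings {n k m : ℕ} (s : Fin k ↪ Fin n) (t : Fin m ↪ Fin n) :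
    Discrete (ofEmbeddings s t) := fun _ _ => id

theorem iso_of_s_eq_t_iff {P Q : Iposet} (hP : Discrete P) (hQ : Discrete Q) (hn : P.n = Q.n)
    (hk : P.k = Q.k) (hm : P.m = Q.m)
    (h : ∀ i j, P.s i = P.t j ↔ Q.s (Fin.cast hk i) = Q.t (Fin.cast hm j)) : Iso P Q := by
  let φ : Fin P.k ⊕ Fin P.m → Fin P.n := Sum.elim P.s P.t
  let ψ : Fin P.k ⊕ Fin P.m → Fin P.n :=
    Fin.cast hn.symm ∘ Sum.elim (Q.s ∘ Fin.cast hk) (Q.t ∘ Fin.cast hm)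
  have hker : ∀ x y, φ x = φ y ↔ ψ x = ψ y := by
    rintro (i | j) (i' | j') <;>
      simp [φ, ψ, P.s_inj.eq_iff, P.t_inj.eq_iff, Q.s_inj.eq_iff, Q.t_inj.eq_iff, h, eq_comm]
  obtain ⟨σ, hσ⟩ := Equiv.Perm.exists_extending_pair_of_eq_iff φ ψ hker
  refine ⟨hk, hm, σ.trans (finCongr hn), fun x y => iff_of_false (hP x y) (hQ _ _),
    fun i => ?_, fun j => ?_⟩
  · simpa [φ, ψ] using congrArg (Fin.cast hn) (hσ (.inl i))
  · simpa [φ, ψ] using congrArg (Fin.cast hn) (hσ (.inr j))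

def overlap (P : Iposet) (a b : ℕ) : Prop := ∃ i j, P.s i = P.t j ∧ (i : ℕ) = a ∧ (j : ℕ) = b

theorem overlap_val_iff (P : Iposet) (i : Fin P.k) (j : Fin P.m) :
    P.overlap i j ↔ P.s i = P.t j :=
  ⟨fun ⟨_, _, h, hi, hj⟩ => Fin.ext hi ▸ Fin.ext hj ▸ h, fun h => ⟨i, j, h, rfl, rfl⟩⟩

/-- Indexing the overlap by `ℕ` makes signatures of iposets with different arities comparable. -/
def signature (P : Iposet) : ℕ × ℕ × (ℕ → ℕ → Prop) := (P.k, P.m, P.overlap)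

theorem signature_eq_of_iso {P Q : Iposet} (h : Iso P Q) : P.signature = Q.signature := by
  obtain ⟨hk, hm, f, -, hs, ht⟩ := h
  refine Prod.ext hk (Prod.ext hm (funext₂ fun a b => propext ⟨?_, ?_⟩))
  · rintro ⟨i, j, hij, rfl, rfl⟩
    exact ⟨Fin.cast hk i, Fin.cast hm j, by rw [← hs, ← ht, hij], rfl, rfl⟩
  · rintro ⟨i, j, hij, rfl, rfl⟩
    refine ⟨Fin.cast hk.symm i, Fin.cast hm.symm j, f.injective ?_, rfl, rfl⟩
    simpa [hs, ht] using hij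

noncomputable def realize {n k m : ℕ} (p : PartialEmbedding (Fin m) (Fin k))
    (hp : k + m ≤ n + #p.1) : Iposet :=
  have hcard : Fintype.card (Fin k ⊕ {j // j ∉ p.1}) ≤ n := by
    have := p.card_sum_compl_add_card
    simp only [Fintype.card_fin] at this
    omega
  let ι := (Function.Embedding.nonempty_of_card_le (by simpa using hcard)).some
  ofEmbeddings (Function.Embedding.inl.trans ι) (p.toSum.trans ι)

theorem realize_s_eq_t_iff {n k m : ℕ} (p : PartialEmbedding (Fin m) (Fin k))
    (hp : k + m ≤ n + #p.1) (i : Fin k) (j : Fin m) :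
    (realize p hp).s i = (realize p hp).t j ↔ p.Rel j i :=
  (Function.Embedding.injective _).eq_iff.trans (p.inl_eq_toSum_iff j i)

theorem overlap_realize_iff {n k m : ℕ} (p : PartialEmbedding (Fin m) (Fin k))
    (hp : k + m ≤ n + #p.1) (i : Fin k) (j : Fin m) :
    (realize p hp).overlap i j ↔ p.Rel j i :=
  (overlap_val_iff (realize p hp) i j).trans (realize_s_eq_t_iff p hp i j)

abbrev DiscreteData (n : ℕ) : Type :=
  Σ (k m : Fin (n + 1)), {p : PartialEmbedding (Fin m) (Fin k) // (k : ℕ) + m ≤ n + #p.1}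

abbrev DiscreteClasses (n : ℕ) : Type :=
  Quot (fun (P Q : {P : Iposet // P.n = n ∧ Discrete P}) => Iso P.1 Q.1)

noncomputable def DiscreteData.toClass {n : ℕ} (d : DiscreteData n) : DiscreteClasses n :=
  Quot.mk _ ⟨realize d.2.2.1 d.2.2.2, rfl, discrete_ofEmbeddings _ _⟩

theorem DiscreteData.toClass_injective (n : ℕ) :
    Injective (DiscreteData.toClass (n := n)) := by
  rintro ⟨k, m, p, hp⟩ ⟨k', m', p', hp'⟩ h
  have hsig := congrArg (Quot.lift (fun P => P.1.signature) fun _ _ => signature_eq_of_iso) h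
  obtain rfl : k = k' := Fin.ext (congrArg Prod.fst hsig)
  obtain rfl : m = m' := Fin.ext (congrArg (·.2.1) hsig)
  obtain rfl : p = p' := PartialEmbedding.rel_injective <| funext₂ fun j i => by
    rw [← propext (overlap_realize_iff p hp i j), ← propext (overlap_realize_iff p' hp' i j)]
    exact congrFun₂ (congrArg (·.2.2) hsig) (i : ℕ) (j : ℕ)
  rfl

theorem DiscreteData.toClass_surjective (n : ℕ) :
    Surjective (DiscreteData.toClass (n := n)) := by
  rintro ⟨P, rfl, hP⟩
  let p := PartialEmbedding.ofEmbeddings ⟨P.s, P.s_inj⟩ ⟨P.t, P.t_inj⟩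
  have hp : P.k + P.m ≤ P.n + #p.1 := by
    have := p.card_sum_compl_add_card
    have hinj : Injective (Sum.elim P.s (P.t ∘ (↑)) : Fin P.k ⊕ {j // j ∉ p.1} → Fin P.n) :=
      PartialEmbedding.injective_sumElim_ofEmbeddings ⟨P.s, P.s_inj⟩ ⟨P.t, P.t_inj⟩
    have := Fintype.card_le_of_injective _ hinj
    simp only [Fintype.card_fin] at *
    omega
  refine ⟨⟨⟨P.k, Nat.lt_succ_of_le (Fin.le_of_injective _ P.s_inj)⟩,
    ⟨P.m, Nat.lt_succ_of_le (Fin.le_of_injective _ P.t_inj)⟩, p, hp⟩, Quot.sound ?_⟩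
  refine iso_of_s_eq_t_iff (discrete_ofEmbeddings _ _) hP rfl rfl rfl fun i j => ?_
  exact (realize_s_eq_t_iff p hp i j).trans (PartialEmbedding.rel_ofEmbeddings _ _ j i)

theorem card_discreteData (n : ℕ) :
    Fintype.card (DiscreteData n) =
      ∑ k ∈ range (n + 1), ∑ m ∈ range (n + 1),
        ∑ u ∈ Icc (k + m - n) (min k m), k.choose u * m.choose u * u.factorial := by
  rw [Fintype.card_sigma, ← Fin.sum_univ_eq_sum_range]
  refine sum_congr rfl fun k _ => ?_
  rw [Fintype.card_sigma, ← Fin.sum_univ_eq_sum_range]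
  refine sum_congr rfl fun m _ => ?_
  rw [PartialEmbedding.card_subtype_domain_card fun u => (k : ℕ) + m ≤ n + u, Fintype.card_fin,
    Fintype.card_fin, sum_choose_mul_descFactorial]

end Iposet

open Iposet in
/-- The number of isomorphism classes of discrete iposets on `n` points. -/
theorem count_discrete (n : ℕ) :
    Nat.card (Quot (fun (P Q : {P : Iposet // P.n = n ∧ Discrete P}) =>
        Iso P.1 Q.1)) =
      ∑ a ∈ Finset.range (n + 1), ∑ b ∈ Finset.range (n + 1),
        ∑ u ∈ Finset.Icc (max 0 (a + b - n)) (min a b),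
          a.choose u * b.choose u * u.factorial := by
  rw [← Nat.card_eq_of_bijective _
      ⟨DiscreteData.toClass_injective n, DiscreteData.toClass_surjective n⟩,
    Nat.card_eq_fintype_card, card_discreteData]
  simp only [zero_le, max_eq_right]
end

section
/- Every gluing-parallel iposet P admits a decomposition P = S*W*T where S is a gluing-parallel starter, W is a gluing-parallel Winkowski iposet, and T is a gluing-parallel terminator. -/
/-!
Every gp-iposet `P` has a Winkowski hull: Winkowski interfaces on its own underlying poset that
again give a gp-iposet `W`, and into which the interfaces of `P` embed order-preservingly. Then
`P = S * W * T`, where the discrete iposets `S` and `T` relabel the interfaces of `W`; they are gp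
because the relabellings are monotone. The hull is built by induction on `P`. For `A ⊗ B`, and for
gluings `A * B` in which `A` is not a starter and `B` not a terminator, the hulls of the factors
combine, since then the minimal elements of `A * B` are those of `A` and the maximal ones those
of `B`. Otherwise `A * B` is the other factor with relabelled interfaces, and the relabelling is
monotone because gp-iposets are interface consistent.
-/

theorem Fin.strictMono_append_castAdd_natAdd {a b a' b' : ℕ} {φ : Fin a → Fin a'}
    {ψ : Fin b → Fin b'} (hφ : StrictMono φ) (hψ : StrictMono ψ) :
    StrictMono (Fin.append (fun i => Fin.castAdd b' (φ i)) (fun j => Fin.natAdd a' (ψ j))) := by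
  intro x y hxy
  induction x using Fin.addCases <;> induction y using Fin.addCases <;>
    simp only [Fin.append_left, Fin.append_right, Fin.lt_def, Fin.val_castAdd,
      Fin.val_natAdd] at hxy ⊢
  · exact hφ (Fin.lt_def.2 hxy)
  · omega
  · omega
  · have := Fin.lt_def.1 (hψ (Fin.lt_def.2 (Nat.lt_of_add_lt_add_left hxy)))
    omega

theorem StrictMono.exists_split_last {n k : ℕ} {s : Fin k → Fin (n + 1)}
    (hs : StrictMono s) :
    ∃ (k' k'' : ℕ) (h : k = k' + k'') (s' : Fin k' → Fin n), StrictMono s' ∧ k'' ≤ 1 ∧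
      (∀ i, s (Fin.cast h.symm (Fin.castAdd k'' i)) = (s' i).castSucc) ∧
      ∀ i, s (Fin.cast h.symm (Fin.natAdd k' i)) = Fin.last n := by
  cases k with
  | zero => exact ⟨0, 0, rfl, Fin.elim0, fun a => a.elim0, by omega, fun i => i.elim0,
      fun i => i.elim0⟩
  | succ j =>
    by_cases hlast : s (Fin.last j) = Fin.last n
    · have hne : ∀ i : Fin j, s i.castSucc ≠ Fin.last n := fun i =>
        (hlast ▸ hs (Fin.castSucc_lt_last i)).ne
      refine ⟨j, 1, rfl, fun i => (s i.castSucc).castPred (hne i), fun a b hab => ?_, le_rfl,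
        fun i => Fin.castSucc_castPred _ (hne i), fun i => ?_⟩
      · exact Fin.castPred_lt_castPred_iff.2 (hs (Fin.castSucc_lt_castSucc_iff.2 hab))
      · rw [Fin.fin_one_eq_zero i]; exact hlast
    · have hne : ∀ i, s i ≠ Fin.last n := fun i hi =>
        hlast (le_antisymm (Fin.le_last _) (hi ▸ hs.monotone (Fin.le_last i)))
      exact ⟨j + 1, 0, rfl, fun i => (s i).castPred (hne i),
        fun a b hab => Fin.castPred_lt_castPred_iff.2 (hs hab), zero_le_one,
        fun i => Fin.castSucc_castPred _ (hne i), fun i => i.elim0⟩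

namespace Iposet

open Function

def withSources (P : Iposet) {k : ℕ} (s : Fin k → Fin P.n) (hs : Injective s)
    (hmin : ∀ i, IsMinEl P (s i)) : Iposet :=
  { P with k := k, s := s, s_inj := hs, s_min := hmin }

def withTargets (P : Iposet) {m : ℕ} (t : Fin m → Fin P.n) (ht : Injective t)
    (hmax : ∀ i, IsMaxEl P (t i)) : Iposet :=
  { P with m := m, t := t, t_inj := ht, t_max := hmax }

def discrete (n : ℕ) {k m : ℕ} (s : Fin k → Fin n) (t : Fin m → Fin n) (hs : Injective s)
    (ht : Injective t) : Iposet :=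
  ⟨n, fun _ _ => False, fun _ h => h, fun _ _ _ h _ => h, k, m, s, t, hs, ht,
    fun _ _ h => h, fun _ _ h => h⟩

section Discrete

variable {n k m : ℕ} {s : Fin k → Fin n} {t : Fin m → Fin n} {hs : Injective s}
  {ht : Injective t}

theorem starter_discrete (hbij : Bijective t) : Starter (discrete n s t hs ht) :=
  ⟨fun _ _ h => h, hbij⟩

theorem terminator_discrete (hbij : Bijective s) : Terminator (discrete n s t hs ht) :=
  ⟨fun _ _ h => h, hbij⟩

end Discrete

theorem gp_discrete {n k m : ℕ} {s : Fin k → Fin n} {t : Fin m → Fin n} (hs : StrictMono s)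
    (ht : StrictMono t) : GP (discrete n s t hs.injective ht.injective) := by
  induction n generalizing k m with
  | zero => exact GP.empty _ rfl
  | succ n ih =>
    -- monotonicity puts the interface index of the last point, if any, last, as `⊗` requires
    obtain ⟨k', k'', hk, s', hs', hk'', hs_castAdd, hs_natAdd⟩ := hs.exists_split_last
    obtain ⟨m', m'', hm, t', ht', hm'', ht_castAdd, ht_natAdd⟩ := ht.exists_split_last
    have hpoint : ∀ {l : ℕ}, l ≤ 1 → Injective (fun _ : Fin l => (0 : Fin 1)) :=
      fun hl a b _ => Fin.ext (by omega)
    refine GP.par _ _ _ (ih hs' ht') (GP.single (discrete 1 _ _ (hpoint hk'') (hpoint hm'')) rfl)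
      ⟨hk, hm, Fin.castSucc, fun _ => Fin.last n, Fin.castSucc_injective n,
        fun a b _ => Subsingleton.elim (α := Fin 1) a b, fun x => ?_,
        fun a _ => Fin.castSucc_ne_last a, fun x y => ?_, hs_castAdd, hs_natAdd, ht_castAdd,
        ht_natAdd⟩
    · induction x using Fin.lastCases with
      | last => exact Or.inr ⟨(0 : Fin 1), rfl⟩
      | cast a => exact Or.inl ⟨a, rfl⟩
    · simp [discrete]

theorem isGluing_withTargets_discrete (P : Iposet) {m' : ℕ} {t' : Fin m' → Fin P.n}
    (ht' : Injective t') (hmax : ∀ i, IsMaxEl P (t' i)) {τ : Fin P.m → Fin m'}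
    (hτ : Injective τ) (ht : ∀ i, t' (τ i) = P.t i) :
    IsGluing (P.withTargets t' ht' hmax) (discrete m' id τ injective_id hτ) P := by
  refine ⟨⟨rfl, rfl, rfl, id, t', injective_id, ht', fun x => .inl ⟨x, rfl⟩, fun _ => rfl,
    fun _ b h => ⟨b, h⟩, fun x y => ⟨fun h => .inl ⟨x, y, rfl, rfl, h⟩, ?_⟩,
    fun _ => rfl, fun i => (ht i).symm⟩⟩
  rintro (⟨a, b, rfl, rfl, h⟩ | ⟨_, _, _, _, h⟩ | ⟨_, b, _, _, _, hb⟩)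
  exacts [h, h.elim, (hb b rfl).elim]

theorem isGluing_discrete_withSources (P : Iposet) {k' : ℕ} {s' : Fin k' → Fin P.n}
    (hs' : Injective s') (hmin : ∀ i, IsMinEl P (s' i)) {σ : Fin P.k → Fin k'}
    (hσ : Injective σ) (hs : ∀ i, s' (σ i) = P.s i) :
    IsGluing (discrete k' σ id hσ injective_id) (P.withSources s' hs' hmin) P := by
  refine ⟨⟨rfl, rfl, rfl, s', id, hs', injective_id, fun x => .inr ⟨x, rfl⟩, fun _ => rfl,
    fun a _ _ => ⟨a, rfl⟩, fun x y => ⟨fun h => .inr (.inl ⟨x, y, rfl, rfl, h⟩), ?_⟩,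
    fun i => (hs i).symm, fun _ => rfl⟩⟩
  rintro (⟨_, _, _, _, h⟩ | ⟨a, b, rfl, rfl, h⟩ | ⟨a, _, _, _, ha, _⟩)
  exacts [h.elim, h, (ha a rfl).elim]

theorem GP.of_iso {P Q : Iposet} (hP : GP P) (hPQ : Iso P Q) : GP Q := by
  obtain ⟨hk, hm, e, hlt, hs, ht⟩ := hPQ
  refine GP.glue P _ Q hP (gp_discrete strictMono_id strictMono_id)
    ⟨rfl, hk.symm, hm.symm, e, fun i => e (P.t i), e.injective, e.injective.comp P.t_inj,
      fun x => .inl (e.surjective x), fun _ => rfl, fun _ b h => ⟨b, e.injective h⟩,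
      fun x y => ⟨fun h => .inl ⟨e.symm x, e.symm y, by simp, by simp,
        by simpa [hlt] using h⟩, ?_⟩,
      fun i => (hs (Fin.cast hk.symm i)).symm, fun i => (ht (Fin.cast hm.symm i)).symm⟩
  rintro (⟨a, b, rfl, rfl, h⟩ | ⟨_, _, _, _, h⟩ | ⟨_, b, _, _, _, hb⟩)
  exacts [(hlt a b).1 h, h.elim, (hb b rfl).elim]

structure WinkHull (P : Iposet) where
  k : ℕ
  m : ℕ
  s : Fin k → Fin P.n
  t : Fin m → Fin P.n
  s_inj : Injective s
  t_inj : Injective t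
  isMinEl_iff : ∀ x, IsMinEl P x ↔ ∃ i, s i = x
  isMaxEl_iff : ∀ x, IsMaxEl P x ↔ ∃ i, t i = x
  σ : Fin P.k → Fin k
  σ_strictMono : StrictMono σ
  s_σ : ∀ i, s (σ i) = P.s i
  τ : Fin P.m → Fin m
  τ_strictMono : StrictMono τ
  t_τ : ∀ i, t (τ i) = P.t i

namespace WinkHull

variable {P : Iposet} (H : P.WinkHull)

theorem isMinEl_s (i : Fin H.k) : IsMinEl P (H.s i) := (H.isMinEl_iff _).2 ⟨i, rfl⟩

theorem isMaxEl_t (i : Fin H.m) : IsMaxEl P (H.t i) := (H.isMaxEl_iff _).2 ⟨i, rfl⟩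

def toIposet : Iposet :=
  (P.withSources H.s H.s_inj H.isMinEl_s).withTargets H.t H.t_inj H.isMaxEl_t

theorem wink_toIposet : Wink H.toIposet := ⟨H.isMinEl_iff, H.isMaxEl_iff⟩

end WinkHull

theorem interfaceConsistent_of_n_le_one {P : Iposet} (hn : P.n ≤ 1) : InterfaceConsistent P := by
  have : Subsingleton (Fin P.n) := Fin.subsingleton_iff_le_one.2 hn
  intro i j i' j' _ _
  rw [P.s_inj (Subsingleton.elim (P.s i) (P.s j)), P.t_inj (Subsingleton.elim (P.t i') (P.t j'))]
  simp

theorem GluingData.interfaceConsistent {A B R : Iposet} (d : GluingData A B R)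
    (hA : InterfaceConsistent A) (hB : InterfaceConsistent B) : InterfaceConsistent R := by
  have glued : ∀ (i : Fin R.k) (i' : Fin R.m), R.s i = R.t i' →
      ∃ r, A.s (Fin.cast d.hk i) = A.t r ∧ B.s (Fin.cast d.hg r) = B.t (Fin.cast d.hm i') := by
    intro i i' h
    rw [d.s_eq, d.t_eq] at h
    obtain ⟨r, hr⟩ := d.overlap _ _ h
    exact ⟨r, hr, d.g_inj (by rw [← d.agree, ← hr, h])⟩
  intro i j i' j' hi hj
  obtain ⟨r, hAi, hBi⟩ := glued i i' hi
  obtain ⟨r', hAj, hBj⟩ := glued j j' hj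
  simpa using (hA _ _ r r' hAi hAj).trans (hB _ _ _ _ hBi hBj)

namespace ParData

variable {A B R : Iposet}

theorem s_cases (d : ParData A B R) (i : Fin R.k) :
    (∃ a : Fin A.k, (i : ℕ) = a ∧ R.s i = d.f (A.s a)) ∨
      ∃ b : Fin B.k, (i : ℕ) = A.k + b ∧ R.s i = d.g (B.s b) := by
  obtain ⟨j, rfl⟩ : ∃ j, Fin.cast d.hk.symm j = i := ⟨Fin.cast d.hk i, by simp⟩
  induction j using Fin.addCases with
  | left a => exact .inl ⟨a, by simp, d.s_eq₁ a⟩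
  | right b => exact .inr ⟨b, by simp, d.s_eq₂ b⟩

theorem t_cases (d : ParData A B R) (i : Fin R.m) :
    (∃ a : Fin A.m, (i : ℕ) = a ∧ R.t i = d.f (A.t a)) ∨
      ∃ b : Fin B.m, (i : ℕ) = A.m + b ∧ R.t i = d.g (B.t b) := by
  obtain ⟨j, rfl⟩ : ∃ j, Fin.cast d.hm.symm j = i := ⟨Fin.cast d.hm i, by simp⟩
  induction j using Fin.addCases with
  | left a => exact .inl ⟨a, by simp, d.t_eq₁ a⟩
  | right b => exact .inr ⟨b, by simp, d.t_eq₂ b⟩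

theorem source_eq_target (d : ParData A B R) {i : Fin R.k} {i' : Fin R.m}
    (h : R.s i = R.t i') :
    (∃ (a : Fin A.k) (a' : Fin A.m), (i : ℕ) = a ∧ (i' : ℕ) = a' ∧ A.s a = A.t a') ∨
      ∃ (b : Fin B.k) (b' : Fin B.m),
        (i : ℕ) = A.k + b ∧ (i' : ℕ) = A.m + b' ∧ B.s b = B.t b' := by
  rcases d.s_cases i with ⟨a, hi, hs⟩ | ⟨b, hi, hs⟩ <;>
    rcases d.t_cases i' with ⟨a', hi', ht⟩ | ⟨b', hi', ht⟩ <;> rw [hs, ht] at h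
  · exact .inl ⟨a, a', hi, hi', d.f_inj h⟩
  · exact (d.disjoint _ _ h).elim
  · exact (d.disjoint _ _ h.symm).elim
  · exact .inr ⟨b, b', hi, hi', d.g_inj h⟩

theorem interfaceConsistent (d : ParData A B R) (hA : InterfaceConsistent A)
    (hB : InterfaceConsistent B) : InterfaceConsistent R := by
  intro i j i' j' hi hj
  rcases d.source_eq_target hi with ⟨a, a', hi, hi', ha⟩ | ⟨b, b', hi, hi', hb⟩ <;>
    rcases d.source_eq_target hj with ⟨c, c', hj, hj', hc⟩ | ⟨e, e', hj, hj', he⟩ <;>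
    rw [hi, hi', hj, hj']
  · exact hA a c a' c' ha hc
  · exact iff_of_true (by omega) (by omega)
  · exact iff_of_false (by omega) (by omega)
  · simpa using hB b e b' e' hb he

end ParData

theorem GP.interfaceConsistent {P : Iposet} (h : GP P) : InterfaceConsistent P := by
  induction h with
  | empty P hn => exact interfaceConsistent_of_n_le_one (by omega)
  | single P hn => exact interfaceConsistent_of_n_le_one hn.le
  | glue A B R _ _ hg ihA ihB => exact hg.some.interfaceConsistent ihA ihB
  | par A B R _ _ hp ihA ihB => exact hp.some.interfaceConsistent ihA ihB

theorem InterfaceConsistent.exists_strictMono_of_surjective_t {P : Iposet}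
    (hP : InterfaceConsistent P) (ht : Surjective P.t) :
    ∃ ι : Fin P.k → Fin P.m, StrictMono ι ∧ ∀ i, P.t (ι i) = P.s i := by
  choose ι hι using fun i => ht (P.s i)
  exact ⟨ι, fun i j hij => (hP i j _ _ (hι i).symm (hι j).symm).1 hij, hι⟩

theorem InterfaceConsistent.exists_strictMono_of_surjective_s {P : Iposet}
    (hP : InterfaceConsistent P) (hs : Surjective P.s) :
    ∃ κ : Fin P.m → Fin P.k, StrictMono κ ∧ ∀ i, P.s (κ i) = P.t i := by
  choose κ hκ using fun i => hs (P.t i)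
  exact ⟨κ, fun i j hij => (hP _ _ i j (hκ i) (hκ j)).2 hij, hκ⟩

theorem exists_gp_winkHull_of_n_le_one {P : Iposet} (hn : P.n ≤ 1) :
    ∃ H : P.WinkHull, GP H.toIposet := by
  have : Subsingleton (Fin P.n) := Fin.subsingleton_iff_le_one.2 hn
  have hmin : ∀ x, IsMinEl P x := fun x y h => P.lt_irrefl x (Subsingleton.elim y x ▸ h)
  have hmax : ∀ x, IsMaxEl P x := fun x y h => P.lt_irrefl x (Subsingleton.elim y x ▸ h)
  have hmono : ∀ {l : ℕ} (u : Fin l → Fin P.n), Injective u → StrictMono u :=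
    fun u hu a b hab => (hab.ne (hu (Subsingleton.elim _ _))).elim
  refine ⟨⟨P.n, P.n, id, id, injective_id, injective_id,
    fun x => iff_of_true (hmin x) ⟨x, rfl⟩, fun x => iff_of_true (hmax x) ⟨x, rfl⟩,
    P.s, hmono _ P.s_inj, fun _ => rfl, P.t, hmono _ P.t_inj, fun _ => rfl⟩, ?_⟩
  rcases Nat.le_one_iff_eq_zero_or_eq_one.1 hn with h | h
  exacts [GP.empty _ h, GP.single _ h]

theorem exists_gp_winkHull_of_orderIso {B R : Iposet} (e : Fin B.n ≃ Fin R.n)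
    (he : ∀ x y, B.lt x y ↔ R.lt (e x) (e y))
    {ι : Fin R.k → Fin B.k} (hι : StrictMono ι) (hs : ∀ i, e (B.s (ι i)) = R.s i)
    {κ : Fin R.m → Fin B.m} (hκ : StrictMono κ) (ht : ∀ i, e (B.t (κ i)) = R.t i) :
    (∃ H : B.WinkHull, GP H.toIposet) → ∃ H : R.WinkHull, GP H.toIposet := by
  rintro ⟨H, hH⟩
  have hmin : ∀ x, IsMinEl R (e x) ↔ IsMinEl B x := fun x => by
    simp only [IsMinEl, he, e.forall_congr_right (q := fun y => ¬ R.lt y (e x))]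
  have hmax : ∀ x, IsMaxEl R (e x) ↔ IsMaxEl B x := fun x => by
    simp only [IsMaxEl, he, e.forall_congr_right (q := fun y => ¬ R.lt (e x) y)]
  refine ⟨⟨H.k, H.m, e ∘ H.s, e ∘ H.t, e.injective.comp H.s_inj, e.injective.comp H.t_inj,
    e.surjective.forall.2 fun x => ?_, e.surjective.forall.2 fun x => ?_,
    H.σ ∘ ι, H.σ_strictMono.comp hι, fun i => ?_,
    H.τ ∘ κ, H.τ_strictMono.comp hκ, fun i => ?_⟩,
    hH.of_iso ⟨rfl, rfl, e, he, fun _ => rfl, fun _ => rfl⟩⟩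
  · simp [hmin, H.isMinEl_iff]
  · simp [hmax, H.isMaxEl_iff]
  · simp [H.s_σ, hs]
  · simp [H.t_τ, ht]

namespace GluingData

variable {A B R : Iposet} (d : GluingData A B R)

theorem isMinEl_f {a : Fin A.n} (ha : IsMinEl A a) : IsMinEl R (d.f a) := by
  intro y hy
  rcases (d.order y (d.f a)).1 hy with
    ⟨a', b, _, hb, h⟩ | ⟨a', b, _, hb, h⟩ | ⟨_, b, _, hb, _, hbs⟩
  · exact ha a' (d.f_inj hb ▸ h)
  · obtain ⟨i, rfl⟩ := d.overlap a b hb.symm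
    exact B.s_min _ a' (d.g_inj (hb.trans (d.agree i)) ▸ h)
  · obtain ⟨i, rfl⟩ := d.overlap a b hb.symm
    exact hbs _ (d.g_inj (hb.trans (d.agree i)))

theorem isMaxEl_g {b : Fin B.n} (hb : IsMaxEl B b) : IsMaxEl R (d.g b) := by
  intro y hy
  rcases (d.order (d.g b) y).1 hy with
    ⟨a, b', ha, _, h⟩ | ⟨a, b', ha, _, h⟩ | ⟨a, _, ha, _, hat, _⟩
  · obtain ⟨i, rfl⟩ := d.overlap a b ha
    exact A.t_max i b' h
  · exact hb b' (d.g_inj ha ▸ h)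
  · obtain ⟨i, rfl⟩ := d.overlap a b ha
    exact hat i rfl

theorem isMinEl_of_isMinEl_f {a : Fin A.n} (ha : IsMinEl R (d.f a)) : IsMinEl A a :=
  fun y hy => ha (d.f y) ((d.order _ _).2 (.inl ⟨y, a, rfl, rfl, hy⟩))

theorem isMaxEl_of_isMaxEl_g {b : Fin B.n} (hb : IsMaxEl R (d.g b)) : IsMaxEl B b :=
  fun y hy => hb (d.g y) ((d.order _ _).2 (.inr (.inl ⟨b, y, rfl, rfl, hy⟩)))

/-- A non-target `a₀` of `A` lies below every non-source of `B` in `R`. -/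
theorem exists_f_eq_of_isMinEl {a₀ : Fin A.n} (ha₀ : ∀ i, A.t i ≠ a₀) {x : Fin R.n}
    (hx : IsMinEl R x) : ∃ a, d.f a = x := by
  rcases d.cover x with hf | ⟨b, rfl⟩
  · exact hf
  by_cases hbs : ∃ j, B.s j = b
  · obtain ⟨j, rfl⟩ := hbs
    exact ⟨A.t (Fin.cast d.hg.symm j), d.agree _⟩
  · exact (hx (d.f a₀) ((d.order _ _).2 (.inr (.inr ⟨a₀, b, rfl, rfl,
      fun i h => ha₀ i h.symm, fun j h => hbs ⟨j, h.symm⟩⟩)))).elim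

theorem exists_g_eq_of_isMaxEl {b₀ : Fin B.n} (hb₀ : ∀ j, B.s j ≠ b₀) {x : Fin R.n}
    (hx : IsMaxEl R x) : ∃ b, d.g b = x := by
  rcases d.cover x with ⟨a, rfl⟩ | hg
  · by_cases hat : ∃ i, A.t i = a
    · obtain ⟨i, rfl⟩ := hat
      exact ⟨B.s (Fin.cast d.hg i), (d.agree i).symm⟩
    · exact (hx (d.g b₀) ((d.order _ _).2 (.inr (.inr ⟨a, b₀, rfl, rfl,
        fun i h => hat ⟨i, h.symm⟩, fun j h => hb₀ j h.symm⟩)))).elim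
  · exact hg

theorem g_surjective (hA : Surjective A.t) : Surjective d.g := by
  intro x
  rcases d.cover x with ⟨a, rfl⟩ | hg
  · obtain ⟨i, rfl⟩ := hA a
    exact ⟨B.s (Fin.cast d.hg i), (d.agree i).symm⟩
  · exact hg

theorem f_surjective (hB : Surjective B.s) : Surjective d.f := by
  intro x
  rcases d.cover x with hf | ⟨b, rfl⟩
  · exact hf
  · obtain ⟨j, rfl⟩ := hB b
    exact ⟨A.t (Fin.cast d.hg.symm j), d.agree _⟩

theorem lt_g_iff (hA : Surjective A.t) (x y : Fin B.n) : R.lt (d.g x) (d.g y) ↔ B.lt x y := by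
  refine ⟨fun h => ?_, fun h => (d.order _ _).2 (.inr (.inl ⟨x, y, rfl, rfl, h⟩))⟩
  rcases (d.order _ _).1 h with
    ⟨a, _, _, _, h⟩ | ⟨_, _, hx, hy, h⟩ | ⟨a, _, _, _, hat, _⟩
  · obtain ⟨i, rfl⟩ := hA a
    exact (A.t_max i _ h).elim
  · rwa [← d.g_inj hx, ← d.g_inj hy]
  · obtain ⟨i, rfl⟩ := hA a
    exact (hat i rfl).elim

theorem lt_f_iff (hB : Surjective B.s) (x y : Fin A.n) : R.lt (d.f x) (d.f y) ↔ A.lt x y := by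
  refine ⟨fun h => ?_, fun h => (d.order _ _).2 (.inl ⟨x, y, rfl, rfl, h⟩)⟩
  rcases (d.order _ _).1 h with
    ⟨_, _, hx, hy, h⟩ | ⟨_, b, _, _, h⟩ | ⟨_, b, _, _, _, hbs⟩
  · rwa [← d.f_inj hx, ← d.f_inj hy]
  · obtain ⟨j, rfl⟩ := hB b
    exact (B.s_min j _ h).elim
  · obtain ⟨j, rfl⟩ := hB b
    exact (hbs j rfl).elim

theorem exists_gp_winkHull_of_surjective_t (d : GluingData A B R) (hA : InterfaceConsistent A)
    (hAt : Surjective A.t) :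
    (∃ H : B.WinkHull, GP H.toIposet) → ∃ H : R.WinkHull, GP H.toIposet := by
  obtain ⟨ι, hι, hιs⟩ := hA.exists_strictMono_of_surjective_t hAt
  have hg : Bijective d.g := ⟨d.g_inj, d.g_surjective hAt⟩
  refine exists_gp_winkHull_of_orderIso (Equiv.ofBijective d.g hg)
    (fun x y => (d.lt_g_iff hAt x y).symm) (ι := fun i => Fin.cast d.hg (ι (Fin.cast d.hk i)))
    (fun i j h => hι h) (fun i => ?_) (κ := Fin.cast d.hm) (Fin.cast_strictMono _)
    (fun i => (d.t_eq i).symm)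
  rw [Equiv.ofBijective_apply, ← d.agree, hιs, d.s_eq]

theorem exists_gp_winkHull_of_surjective_s (d : GluingData A B R) (hB : InterfaceConsistent B)
    (hBs : Surjective B.s) :
    (∃ H : A.WinkHull, GP H.toIposet) → ∃ H : R.WinkHull, GP H.toIposet := by
  obtain ⟨κ, hκ, hκt⟩ := hB.exists_strictMono_of_surjective_s hBs
  have hf : Bijective d.f := ⟨d.f_inj, d.f_surjective hBs⟩
  refine exists_gp_winkHull_of_orderIso (Equiv.ofBijective d.f hf)
    (fun x y => (d.lt_f_iff hBs x y).symm) (ι := Fin.cast d.hk) (Fin.cast_strictMono _)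
    (fun i => (d.s_eq i).symm) (κ := fun i => Fin.cast d.hg.symm (κ (Fin.cast d.hm i)))
    (fun i j h => hκ h) (fun i => ?_)
  rw [Equiv.ofBijective_apply, d.agree, Fin.cast_cast, Fin.cast_eq_self, hκt, d.t_eq]

/-- The hull of `R` is the gluing of `A` with the sources of its hull and `B` with the targets
of its hull. -/
theorem exists_gp_winkHull (d : GluingData A B R) {a₀ : Fin A.n}
    (ha₀ : ∀ i, A.t i ≠ a₀) {b₀ : Fin B.n} (hb₀ : ∀ j, B.s j ≠ b₀) :
    (∃ H : A.WinkHull, GP H.toIposet) → (∃ H : B.WinkHull, GP H.toIposet) →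
      ∃ H : R.WinkHull, GP H.toIposet := by
  rintro ⟨HA, hHA⟩ ⟨HB, hHB⟩
  set A' := A.withSources HA.s HA.s_inj HA.isMinEl_s
  set B' := B.withTargets HB.t HB.t_inj HB.isMaxEl_t
  have hA' : GP A' := GP.glue _ _ A' hHA (gp_discrete strictMono_id HA.τ_strictMono)
    (isGluing_withTargets_discrete A' HA.t_inj HA.isMaxEl_t HA.τ_strictMono.injective HA.t_τ)
  have hB' : GP B' := GP.glue _ _ B' (gp_discrete HB.σ_strictMono strictMono_id) hHB
    (isGluing_discrete_withSources B' HB.s_inj HB.isMinEl_s HB.σ_strictMono.injective HB.s_σ)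
  refine ⟨⟨HA.k, HB.m, d.f ∘ HA.s, d.g ∘ HB.t, d.f_inj.comp HA.s_inj, d.g_inj.comp HB.t_inj,
    fun x => ⟨fun hx => ?_, ?_⟩, fun x => ⟨fun hx => ?_, ?_⟩,
    HA.σ ∘ Fin.cast d.hk, HA.σ_strictMono.comp (Fin.cast_strictMono _), fun i => ?_,
    HB.τ ∘ Fin.cast d.hm, HB.τ_strictMono.comp (Fin.cast_strictMono _), fun i => ?_⟩,
    GP.glue A' B' _ hA' hB' ⟨⟨d.hg, rfl, rfl, d.f, d.g, d.f_inj, d.g_inj, d.cover, d.agree,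
      d.overlap, d.order, fun _ => rfl, fun _ => rfl⟩⟩⟩
  · obtain ⟨a, rfl⟩ := d.exists_f_eq_of_isMinEl ha₀ hx
    obtain ⟨i, rfl⟩ := (HA.isMinEl_iff a).1 (d.isMinEl_of_isMinEl_f hx)
    exact ⟨i, rfl⟩
  · rintro ⟨i, rfl⟩
    exact d.isMinEl_f (HA.isMinEl_s i)
  · obtain ⟨b, rfl⟩ := d.exists_g_eq_of_isMaxEl hb₀ hx
    obtain ⟨i, rfl⟩ := (HB.isMaxEl_iff b).1 (d.isMaxEl_of_isMaxEl_g hx)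
    exact ⟨i, rfl⟩
  · rintro ⟨i, rfl⟩
    exact d.isMaxEl_g (HB.isMaxEl_t i)
  · simp [HA.s_σ, d.s_eq]
  · simp [HB.t_τ, d.t_eq]

end GluingData

namespace ParData

variable {A B R : Iposet} (d : ParData A B R)

theorem isMinEl_f_iff {a : Fin A.n} : IsMinEl R (d.f a) ↔ IsMinEl A a := by
  refine ⟨fun ha y hy => ha (d.f y) ((d.order _ _).2 (.inl ⟨y, a, rfl, rfl, hy⟩)),
    fun ha y hy => ?_⟩
  rcases (d.order y (d.f a)).1 hy with ⟨a', _, _, h, hlt⟩ | ⟨_, _, _, h, _⟩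
  · exact ha a' (d.f_inj h ▸ hlt)
  · exact d.disjoint _ _ h.symm

theorem isMinEl_g_iff {b : Fin B.n} : IsMinEl R (d.g b) ↔ IsMinEl B b := by
  refine ⟨fun hb y hy => hb (d.g y) ((d.order _ _).2 (.inr ⟨y, b, rfl, rfl, hy⟩)),
    fun hb y hy => ?_⟩
  rcases (d.order y (d.g b)).1 hy with ⟨_, _, _, h, _⟩ | ⟨b', _, _, h, hlt⟩
  · exact d.disjoint _ _ h
  · exact hb b' (d.g_inj h ▸ hlt)

theorem isMaxEl_f_iff {a : Fin A.n} : IsMaxEl R (d.f a) ↔ IsMaxEl A a := by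
  refine ⟨fun ha y hy => ha (d.f y) ((d.order _ _).2 (.inl ⟨a, y, rfl, rfl, hy⟩)),
    fun ha y hy => ?_⟩
  rcases (d.order (d.f a) y).1 hy with ⟨_, a', h, _, hlt⟩ | ⟨_, _, h, _, _⟩
  · exact ha a' (d.f_inj h ▸ hlt)
  · exact d.disjoint _ _ h.symm

theorem isMaxEl_g_iff {b : Fin B.n} : IsMaxEl R (d.g b) ↔ IsMaxEl B b := by
  refine ⟨fun hb y hy => hb (d.g y) ((d.order _ _).2 (.inr ⟨b, y, rfl, rfl, hy⟩)),
    fun hb y hy => ?_⟩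
  rcases (d.order (d.g b) y).1 hy with ⟨_, _, h, _, _⟩ | ⟨_, b', h, _, hlt⟩
  · exact d.disjoint _ _ h
  · exact hb b' (d.g_inj h ▸ hlt)

theorem iff_exists_append_eq (d : ParData A B R) {pA : Fin A.n → Prop} {pB : Fin B.n → Prop}
    {pR : Fin R.n → Prop} (hf : ∀ a, pR (d.f a) ↔ pA a) (hg : ∀ b, pR (d.g b) ↔ pB b)
    {k l : ℕ} {u : Fin k → Fin A.n} {v : Fin l → Fin B.n}
    (hu : ∀ a, pA a ↔ ∃ i, u i = a) (hv : ∀ b, pB b ↔ ∃ j, v j = b) (x : Fin R.n) :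
    pR x ↔ ∃ i, Fin.append (d.f ∘ u) (d.g ∘ v) i = x := by
  refine ⟨fun hx => ?_, ?_⟩
  · rcases d.cover x with ⟨a, rfl⟩ | ⟨b, rfl⟩
    · obtain ⟨i, rfl⟩ := (hu a).1 ((hf a).1 hx)
      exact ⟨Fin.castAdd _ i, Fin.append_left _ _ _⟩
    · obtain ⟨j, rfl⟩ := (hv b).1 ((hg b).1 hx)
      exact ⟨Fin.natAdd _ j, Fin.append_right _ _ _⟩
  · rintro ⟨i, rfl⟩
    induction i using Fin.addCases with
    | left i => exact (Fin.append_left _ _ i).symm ▸ (hf _).2 ((hu _).2 ⟨i, rfl⟩)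
    | right j => exact (Fin.append_right _ _ j).symm ▸ (hg _).2 ((hv _).2 ⟨j, rfl⟩)

theorem exists_gp_winkHull (d : ParData A B R) :
    (∃ H : A.WinkHull, GP H.toIposet) → (∃ H : B.WinkHull, GP H.toIposet) →
      ∃ H : R.WinkHull, GP H.toIposet := by
  rintro ⟨HA, hHA⟩ ⟨HB, hHB⟩
  have hs : Injective (Fin.append (d.f ∘ HA.s) (d.g ∘ HB.s)) := Fin.append_injective_iff.2
    ⟨d.f_inj.comp HA.s_inj, d.g_inj.comp HB.s_inj, fun _ _ => d.disjoint _ _⟩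
  have ht : Injective (Fin.append (d.f ∘ HA.t) (d.g ∘ HB.t)) := Fin.append_injective_iff.2
    ⟨d.f_inj.comp HA.t_inj, d.g_inj.comp HB.t_inj, fun _ _ => d.disjoint _ _⟩
  refine ⟨⟨HA.k + HB.k, HA.m + HB.m, _, _, hs, ht,
    d.iff_exists_append_eq (fun _ => d.isMinEl_f_iff) (fun _ => d.isMinEl_g_iff) HA.isMinEl_iff
      HB.isMinEl_iff,
    d.iff_exists_append_eq (fun _ => d.isMaxEl_f_iff) (fun _ => d.isMaxEl_g_iff) HA.isMaxEl_iff
      HB.isMaxEl_iff,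
    fun i => Fin.append (fun a => Fin.castAdd HB.k (HA.σ a)) (fun b => Fin.natAdd HA.k (HB.σ b))
      (Fin.cast d.hk i),
    (Fin.strictMono_append_castAdd_natAdd HA.σ_strictMono HB.σ_strictMono).comp
      (Fin.cast_strictMono _), fun i => ?_,
    fun i => Fin.append (fun a => Fin.castAdd HB.m (HA.τ a)) (fun b => Fin.natAdd HA.m (HB.τ b))
      (Fin.cast d.hm i),
    (Fin.strictMono_append_castAdd_natAdd HA.τ_strictMono HB.τ_strictMono).comp
      (Fin.cast_strictMono _), fun i => ?_⟩, ?_⟩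
  · obtain ⟨j, rfl⟩ : ∃ j, Fin.cast d.hk.symm j = i := ⟨Fin.cast d.hk i, by simp⟩
    induction j using Fin.addCases with
    | left a => simp [HA.s_σ, d.s_eq₁]
    | right b => simp [HB.s_σ, d.s_eq₂]
  · obtain ⟨j, rfl⟩ : ∃ j, Fin.cast d.hm.symm j = i := ⟨Fin.cast d.hm i, by simp⟩
    induction j using Fin.addCases with
    | left a => simp [HA.t_τ, d.t_eq₁]
    | right b => simp [HB.t_τ, d.t_eq₂]
  · refine GP.par _ _ _ hHA hHB ⟨⟨rfl, rfl, d.f, d.g, d.f_inj, d.g_inj, d.cover, d.disjoint,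
      d.order, ?_, ?_, ?_, ?_⟩⟩ <;> intro i <;>
      simp only [WinkHull.toIposet, withSources, withTargets, Fin.cast_eq_self]
    exacts [Fin.append_left _ _ i, Fin.append_right _ _ i, Fin.append_left _ _ i,
      Fin.append_right _ _ i]

end ParData

theorem exists_gp_winkHull {P : Iposet} (h : GP P) : ∃ H : P.WinkHull, GP H.toIposet := by
  induction h with
  | empty P hn => exact exists_gp_winkHull_of_n_le_one (by omega)
  | single P hn => exact exists_gp_winkHull_of_n_le_one hn.le
  | par A B R _ _ hp ihA ihB => exact hp.some.exists_gp_winkHull ihA ihB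
  | glue A B R hA hB hg ihA ihB =>
    obtain ⟨d⟩ := hg
    by_cases hAt : Surjective A.t
    · exact d.exists_gp_winkHull_of_surjective_t hA.interfaceConsistent hAt ihB
    by_cases hBs : Surjective B.s
    · exact d.exists_gp_winkHull_of_surjective_s hB.interfaceConsistent hBs ihA
    obtain ⟨a₀, ha₀⟩ := not_forall.1 hAt
    obtain ⟨b₀, hb₀⟩ := not_forall.1 hBs
    exact d.exists_gp_winkHull (not_exists.1 ha₀) (not_exists.1 hb₀) ihA ihB

end Iposet

open Iposet in
/-- Every gluing-parallel iposet `P` decomposes as `P = S * W * T` with `S`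
a gp-starter, `W` a gp-Winkowski iposet and `T` a gp-terminator. -/
theorem gp_decomp_SWT (P : Iposet) (h : GP P) :
    ∃ S W T X : Iposet, Starter S ∧ GP S ∧ Wink W ∧ GP W ∧
      Terminator T ∧ GP T ∧ IsGluing S W X ∧ IsGluing X T P := by
  obtain ⟨H, hW⟩ := exists_gp_winkHull h
  set X := P.withTargets H.t H.t_inj H.isMaxEl_t
  exact ⟨_, H.toIposet, _, X,
    starter_discrete Function.bijective_id, gp_discrete H.σ_strictMono strictMono_id,
    H.wink_toIposet, hW,
    terminator_discrete Function.bijective_id, gp_discrete strictMono_id H.τ_strictMono,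
    isGluing_discrete_withSources X H.s_inj H.isMinEl_s H.σ_strictMono.injective H.s_σ,
    isGluing_withTargets_discrete P H.t_inj H.isMaxEl_t H.τ_strictMono.injective H.t_τ⟩
end
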